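/- arXiv:1212.5726 — 2 statements merged into one kernel-verified Lean document; each statement's English description precedes it below -/
import Mathlib

section
/- For a topological space X, the following are equivalent: (1) for every pair of pointwise discontinuous functions f : X → ℝ and g : X → ℝ, the set C(f) ∩ C(g) is non-empty; (2) for every pair G, H of dense Gδ subsets of X, the set G ∩ H is non-empty. -/
/-!
Every continuity set is Gδ, so it remains to realise a dense Gδ set `G = ⋂ n, U n` (`U n` open)
as the continuity set of a real function. Take `f x = 1 / (n + 1)` where `n` is the first index
with `x ∉ U n`, and `f = 0` on `G`. Near a point of `G` the first exit comes late, so `f` is small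
there; at a point outside `G`, `f` is positive but vanishes on the dense set `G`.
-/

open Set Topology

theorem ContinuousAt.eq_of_dense_of_eqOn_const {X Y : Type*} [TopologicalSpace X]
    [TopologicalSpace Y] [T1Space Y] {f : X → Y} {s : Set X} {c : Y} {x : X}
    (hf : ContinuousAt f x) (hs : Dense s) (hfs : ∀ y ∈ s, f y = c) : f x = c := by
  have himage : f '' s ⊆ {c} := by
    rintro _ ⟨y, hy, rfl⟩
    exact hfs y hy
  simpa using closure_mono himage (mem_closure_image hf (hs x))

section FirstExit

variable {α : Type*} {U : ℕ → Set α} {x : α}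

open Classical in
noncomputable def firstExitReciprocal (U : ℕ → Set α) (x : α) : ℝ :=
  if h : ∃ n, x ∉ U n then ((Nat.find h : ℝ) + 1)⁻¹ else 0

theorem firstExitReciprocal_nonneg : 0 ≤ firstExitReciprocal U x := by
  unfold firstExitReciprocal
  split_ifs <;> positivity

theorem firstExitReciprocal_eq_zero_iff : firstExitReciprocal U x = 0 ↔ x ∈ ⋂ n, U n := by
  unfold firstExitReciprocal
  split_ifs with h
  · obtain ⟨n, hn⟩ := id h
    exact iff_of_false (inv_ne_zero (by positivity)) fun hx => hn (mem_iInter.mp hx n)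
  · simpa using h

theorem firstExitReciprocal_lt {n : ℕ} (hx : ∀ m ≤ n, x ∈ U m) :
    firstExitReciprocal U x < ((n : ℝ) + 1)⁻¹ := by
  classical
  unfold firstExitReciprocal
  split_ifs with h
  · have hn : n < Nat.find h := Nat.lt_find_iff h n |>.mpr fun m hm => not_not.mpr (hx m hm)
    have hn' : (n : ℝ) + 1 < (Nat.find h : ℝ) + 1 := by exact_mod_cast Nat.succ_lt_succ hn
    exact inv_strictAnti₀ (by positivity) hn'
  · positivity

end FirstExit

section ContinuitySet

variable {X : Type*} [TopologicalSpace X]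

theorem continuousAt_firstExitReciprocal_iff {U : ℕ → Set X} (hU : ∀ n, IsOpen (U n))
    (hd : Dense (⋂ n, U n)) {x : X} :
    ContinuousAt (firstExitReciprocal U) x ↔ x ∈ ⋂ n, U n := by
  refine ⟨fun hx => ?_, fun hx => ?_⟩
  · exact firstExitReciprocal_eq_zero_iff.mp <|
      hx.eq_of_dense_of_eqOn_const hd fun y hy => firstExitReciprocal_eq_zero_iff.mpr hy
  · rw [ContinuousAt, firstExitReciprocal_eq_zero_iff.mpr hx, tendsto_order]
    refine ⟨fun a ha => .of_forall fun y => ha.trans_le firstExitReciprocal_nonneg,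
      fun a ha => ?_⟩
    obtain ⟨n, hn⟩ := exists_nat_one_div_lt ha
    have hnear : ∀ᶠ y in 𝓝 x, ∀ m ∈ Iic n, y ∈ U m :=
      (finite_Iic n).eventually_all.mpr fun m _ => (hU m).mem_nhds (mem_iInter.mp hx m)
    filter_upwards [hnear] with y hy
    exact (firstExitReciprocal_lt hy).trans (by simpa only [one_div] using hn)

theorem IsGδ.exists_setOf_continuousAt_eq {G : Set X} (hG : IsGδ G) (hd : Dense G) :
    ∃ f : X → ℝ, {x | ContinuousAt f x} = G := by
  obtain ⟨U, hU, rfl⟩ := isGδ_iff_eq_iInter_nat.mp hG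
  exact ⟨firstExitReciprocal U, ext fun _ => continuousAt_firstExitReciprocal_iff hU hd⟩

end ContinuitySet

/-- Gauld–Piotrowski characterization of weakly Volterra spaces: for a topological space `X`,
the pointwise-discontinuous-functions condition is equivalent to the dense-Gδ condition. -/
theorem weaklyVolterra_characterization {X : Type*} [TopologicalSpace X] :
    (∀ f g : X → ℝ, Dense {x | ContinuousAt f x} → Dense {x | ContinuousAt g x} →
        ({x | ContinuousAt f x} ∩ {x | ContinuousAt g x}).Nonempty) ↔
    (∀ G H : Set X, IsGδ G → Dense G → IsGδ H → Dense H → (G ∩ H).Nonempty) := by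
  refine ⟨fun h G H hG hGd hH hHd => ?_, fun h f g hf hg => ?_⟩
  · obtain ⟨f, rfl⟩ := hG.exists_setOf_continuousAt_eq hGd
    obtain ⟨g, rfl⟩ := hH.exists_setOf_continuousAt_eq hHd
    exact h f g hGd hHd
  · exact h _ _ (.setOfPred_continuousAt f) hf (.setOfPred_continuousAt g) hg
end

section
/- Let X = {f ∈ 2^{ω₁} : |f⁻¹(1)| ≤ ℵ₀} be the set of all functions from ω₁ to {0,1} with countable support. For every partial function σ from a countable subset of ω₁ to {0,1}, let [σ] = {f ∈ X : σ ⊆ f}, and for every n < ω let Xₙ = {f ∈ X : |f⁻¹(1)| = n}. Equip X with the topology generated by the subbase {[σ] \ Xₙ : σ a countable partial function, n < ω}. Then X is an almost P-space: every non-empty Gδ subset of X has non-empty interior. -/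
/-!
An open set `U ∋ f` is a union of finite intersections of subbasic sets `[σ] \ Xₙ`, so there is a
countable `D` such that `U` contains every `g` with infinite support agreeing with `f` on `D`.
For a Gδ set the countably many such `D` combine into one. Since `ω₁` is uncountable, we can
turn `f` on along a countably infinite `E` disjoint from `D`; the basic open set
`[σ] \ X₀`, with `σ` this modified point restricted to `D ∪ E`, lies inside the Gδ set.
-/

open Set TopologicalSpace

/-- The underlying set: functions from `I` to `Bool` with countable support. -/
def SpadaroX (I : Type*) : Type _ := {f : I → Bool // {i | f i = true}.Countable}

/-- `[σ]`: the set of members of `X` extending the partial function `σ`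
(a partial function is coded as a map `I → Option Bool`). -/
def cylX {I : Type*} (σ : I → Option Bool) : Set (SpadaroX I) :=
  {f | ∀ i b, σ i = some b → f.1 i = b}

/-- `Xₙ`: the set of members of `X` whose support has exactly `n` elements. -/
def XnX {I : Type*} (n : ℕ) : Set (SpadaroX I) :=
  {f | {i | f.1 i = true}.encard = (n : ℕ∞)}

/-- The subbase `{[σ] \ Xₙ : σ a countable partial function, n < ω}`. -/
def spadaroSubbase (I : Type*) : Set (Set (SpadaroX I)) :=
  {s | ∃ (σ : I → Option Bool) (n : ℕ),
    {i | σ i ≠ none}.Countable ∧ s = cylX σ \ XnX n}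

instance spadaroTop (I : Type*) : TopologicalSpace (SpadaroX I) :=
  generateFrom (spadaroSubbase I)

lemma Set.Countable.infinite_compl {α : Type*} [Uncountable α] {s : Set α} (hs : s.Countable) :
    sᶜ.Infinite := fun h => not_countable_univ (by simpa using hs.union h.countable)

namespace SpadaroX

variable {I : Type*}

def IsDeterminedOn (U : Set (SpadaroX I)) (f : SpadaroX I) (D : Set I) : Prop :=
  ∀ g : SpadaroX I, EqOn g.1 f.1 D → {i | g.1 i = true}.Infinite → g ∈ U

lemma IsDeterminedOn.mono {U : Set (SpadaroX I)} {f : SpadaroX I} {D D' : Set I}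
    (h : IsDeterminedOn U f D) (hD : D ⊆ D') : IsDeterminedOn U f D' :=
  fun g hg hinf => h g (hg.mono hD) hinf

lemma notMem_XnX_of_infinite {g : SpadaroX I} (hg : {i | g.1 i = true}.Infinite) (n : ℕ) :
    g ∉ XnX n := by
  simp [XnX, hg.encard_eq]

lemma isOpen_cylX_diff_XnX {σ : I → Option Bool} (hσ : {i | σ i ≠ none}.Countable) (n : ℕ) :
    IsOpen (cylX σ \ XnX n) :=
  GenerateOpen.basic _ ⟨σ, n, hσ, rfl⟩

lemma exists_countable_isDeterminedOn_of_isOpen {U : Set (SpadaroX I)} (hU : IsOpen U)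
    {f : SpadaroX I} (hf : f ∈ U) : ∃ D : Set I, D.Countable ∧ IsDeterminedOn U f D := by
  induction (hU : GenerateOpen (spadaroSubbase I) U) generalizing f with
  | basic t ht =>
    obtain ⟨σ, n, hσ, rfl⟩ := ht
    refine ⟨{i | σ i ≠ none}, hσ, fun g hg hinf => ⟨fun i b hib => ?_, notMem_XnX_of_infinite hinf n⟩⟩
    rw [hg (show σ i ≠ none by simp [hib])]
    exact hf.1 i b hib
  | univ => exact ⟨∅, countable_empty, fun _ _ _ => trivial⟩
  | inter u v _ _ ihu ihv =>
    obtain ⟨D₁, hD₁, hu'⟩ := ihu hf.1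
    obtain ⟨D₂, hD₂, hv'⟩ := ihv hf.2
    exact ⟨D₁ ∪ D₂, hD₁.union hD₂, fun g hg hinf =>
      ⟨(hu'.mono subset_union_left) g hg hinf, (hv'.mono subset_union_right) g hg hinf⟩⟩
  | sUnion S _ ih =>
    obtain ⟨t, htS, hft⟩ := hf
    obtain ⟨D, hD, ht⟩ := ih t htS hft
    exact ⟨D, hD, fun g hg hinf => ⟨t, htS, ht g hg hinf⟩⟩

lemma exists_countable_isDeterminedOn_of_isGδ {s : Set (SpadaroX I)} (hs : IsGδ s)
    {f : SpadaroX I} (hf : f ∈ s) : ∃ D : Set I, D.Countable ∧ IsDeterminedOn s f D := by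
  obtain ⟨T, hTopen, hTcount, rfl⟩ := hs
  choose! D hDc hD using fun t (ht : t ∈ T) =>
    exists_countable_isDeterminedOn_of_isOpen (hTopen t ht) (hf t ht)
  exact ⟨⋃ t ∈ T, D t, hTcount.biUnion hDc, fun g hg hinf t ht =>
    (hD t ht).mono (subset_biUnion_of_mem ht) g hg hinf⟩

open Classical in
noncomputable def restrictOn (f : SpadaroX I) (A : Set I) : I → Option Bool :=
  fun i => if i ∈ A then some (f.1 i) else none

lemma mem_cylX_restrictOn {f g : SpadaroX I} {A : Set I} :
    g ∈ cylX (f.restrictOn A) ↔ EqOn g.1 f.1 A := by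
  simp [cylX, restrictOn, EqOn]

lemma countable_restrictOn_ne_none (f : SpadaroX I) {A : Set I} (hA : A.Countable) :
    {i | f.restrictOn A i ≠ none}.Countable :=
  hA.mono fun i hi => by by_contra h; simp [restrictOn, h] at hi

open Classical in
noncomputable def setTrueOn (f : SpadaroX I) {E : Set I} (hE : E.Countable) : SpadaroX I :=
  ⟨fun i => f.1 i || decide (i ∈ E), (f.2.union hE).mono fun i hi => by simpa using hi⟩

lemma setTrueOn_apply_of_mem (f : SpadaroX I) {E : Set I} (hE : E.Countable) {i : I}
    (hi : i ∈ E) : (f.setTrueOn hE).1 i = true := by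
  simp [setTrueOn, hi]

lemma eqOn_setTrueOn (f : SpadaroX I) {D E : Set I} (hE : E.Countable) (hDE : Disjoint D E) :
    EqOn (f.setTrueOn hE).1 f.1 D := fun i hi => by
  simp [setTrueOn, disjoint_left.1 hDE hi]

lemma IsDeterminedOn.nonempty_interior [Uncountable I] {s : Set (SpadaroX I)} {f : SpadaroX I}
    {D : Set I} (hDc : D.Countable) (hD : IsDeterminedOn s f D) : (interior s).Nonempty := by
  obtain ⟨E, hED, hEc, hEinf⟩ := hDc.infinite_compl.exists_subset_countable_infinite
  have hDE : Disjoint D E := disjoint_compl_right.mono_right hED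
  set f' := f.setTrueOn hEc
  set σ := f'.restrictOn (D ∪ E)
  have infinite_of_mem_cylX : ∀ g ∈ cylX σ, {i | g.1 i = true}.Infinite := fun g hg =>
    hEinf.mono fun i hi =>
      (mem_cylX_restrictOn.1 hg (Or.inr hi)).trans (f.setTrueOn_apply_of_mem hEc hi)
  have hf' : f' ∈ cylX σ := mem_cylX_restrictOn.2 fun _ _ => rfl
  refine ⟨f', mem_interior.2 ⟨cylX σ \ XnX 0, ?_,
    isOpen_cylX_diff_XnX (f'.countable_restrictOn_ne_none (hDc.union hEc)) 0,
    hf', notMem_XnX_of_infinite (infinite_of_mem_cylX f' hf') 0⟩⟩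
  rintro g ⟨hg, -⟩
  exact hD g (((mem_cylX_restrictOn.1 hg).mono subset_union_left).trans
    (f.eqOn_setTrueOn hEc hDE)) (infinite_of_mem_cylX g hg)

end SpadaroX

/-- The space `X` is an almost P-space: every non-empty Gδ set has non-empty interior. -/
theorem spadaro_almostPSpace (I : Type*) (hI : Cardinal.mk I = Cardinal.aleph 1) :
    ∀ s : Set (SpadaroX I), IsGδ s → s.Nonempty → (interior s).Nonempty := by
  have : Uncountable I := Cardinal.aleph0_lt_mk_iff.1 (hI ▸ Cardinal.aleph0_lt_aleph_one)
  rintro s hs ⟨f, hf⟩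
  obtain ⟨D, hDc, hD⟩ := SpadaroX.exists_countable_isDeterminedOn_of_isGδ hs hf
  exact hD.nonempty_interior hDc
end
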